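/- Let U and V be real Hilbert spaces and let a : U × V → ℝ be a bounded bilinear form. Suppose there is β > 0 such that for every u ∈ U, sup over nonzero v ∈ V of a(u,v)/‖v‖_V is at least β‖u‖_U, and suppose additionally that for every nonzero v ∈ V there exists u ∈ U with a(u,v) ≠ 0. Then for every v ∈ V, sup over nonzero u ∈ U of a(u,v)/‖u‖_U is at least β‖v‖_V; in particular the two inf-sup constants in condition (2.8) are equal. -/

import Mathlib

/-!
Let `A : U → V` be the Riesz representation of `a` in its second argument, `⟪A u, v⟫ = a u v`.
The first inf-sup condition says `β ‖u‖ ≤ ‖A u‖`, so `A` has closed range, and nondegeneracy says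
that this range has trivial orthogonal complement; hence `A` is onto. Given `v = A u`, the test
function `u` gives `a u v / ‖u‖ = ‖v‖² / ‖u‖ ≥ β ‖v‖`.
-/

open scoped RealInnerProductSpace NNReal

theorem ContinuousLinearMap.surjective_of_antilipschitz_of_orthogonal_range_eq_bot
    {𝕜 E F : Type*} [RCLike 𝕜] [NormedAddCommGroup E] [NormedSpace 𝕜 E] [CompleteSpace E]
    [NormedAddCommGroup F] [InnerProductSpace 𝕜 F] [CompleteSpace F]
    (T : E →L[𝕜] F) {K : ℝ≥0} (hT : AntilipschitzWith K T)
    (hperp : T.rangeᗮ = ⊥) : Function.Surjective T := by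
  have hclosed : IsClosed (T.range : Set F) := by
    rw [LinearMap.coe_range, ContinuousLinearMap.coe_coe]
    exact hT.isClosed_range T.uniformContinuous
  refine LinearMap.range_eq_top.1 ?_
  rw [← hclosed.submodule_topologicalClosure_eq]
  exact Submodule.topologicalClosure_eq_top_iff.2 hperp

theorem iSup_inner_div_norm_le_norm {V : Type*} [NormedAddCommGroup V] [InnerProductSpace ℝ V]
    (w : V) : ⨆ v : {v : V // v ≠ 0}, ⟪w, v⟫ / ‖(v : V)‖ ≤ ‖w‖ :=
  Real.iSup_le (fun ⟨v, _⟩ => div_le_of_le_mul₀ (norm_nonneg v) (norm_nonneg w)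
    (real_inner_le_norm w v)) (norm_nonneg w)

theorem le_iSup_div_norm {E : Type*} [NormedAddCommGroup E] {f : E → ℝ} {C : ℝ}
    (hf : ∀ x, f x ≤ C * ‖x‖) {x : E} (hx : x ≠ 0) :
    f x / ‖x‖ ≤ ⨆ y : {y : E // y ≠ 0}, f y / ‖(y : E)‖ := by
  refine le_ciSup (f := fun y : {y : E // y ≠ 0} => f y / ‖(y : E)‖) ⟨C, ?_⟩ ⟨x, hx⟩
  rintro _ ⟨⟨y, hy⟩, rfl⟩
  exact (div_le_iff₀ (norm_pos_iff.2 hy)).2 (hf y)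

section Riesz

variable {U V : Type*} [NormedAddCommGroup U] [InnerProductSpace ℝ U]
  [NormedAddCommGroup V] [InnerProductSpace ℝ V] [CompleteSpace V]

noncomputable def rieszOperator (a : U →L[ℝ] V →L[ℝ] ℝ) : U →L[ℝ] V :=
  (InnerProductSpace.toDual ℝ V).symm.toContinuousLinearEquiv.toContinuousLinearMap ∘L a

theorem inner_rieszOperator_apply (a : U →L[ℝ] V →L[ℝ] ℝ) (u : U) (v : V) :
    ⟪rieszOperator a u, v⟫ = a u v := by
  simp [rieszOperator, InnerProductSpace.toDual_symm_apply]

theorem orthogonal_range_rieszOperator_eq_bot (a : U →L[ℝ] V →L[ℝ] ℝ)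
    (hnondeg : ∀ v : V, v ≠ 0 → ∃ u : U, a u v ≠ 0) :
    (rieszOperator a).rangeᗮ = ⊥ := by
  refine (Submodule.eq_bot_iff _).2 fun w hw => ?_
  by_contra hw0
  obtain ⟨u, hu⟩ := hnondeg w hw0
  exact hu (inner_rieszOperator_apply a u w ▸ hw _ ⟨u, rfl⟩)

end Riesz

theorem infsup_transfer_general
    {U V : Type*}
    [NormedAddCommGroup U] [InnerProductSpace ℝ U] [CompleteSpace U]
    [NormedAddCommGroup V] [InnerProductSpace ℝ V] [CompleteSpace V]
    (a : U →ₗ[ℝ] V →ₗ[ℝ] ℝ) (M : ℝ)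
    (hbdd : ∀ (u : U) (v : V), |a u v| ≤ M * ‖u‖ * ‖v‖)
    (β : ℝ) (hβ : 0 < β)
    (hinfsup₁ : ∀ u : U,
      β * ‖u‖ ≤ ⨆ v : {v : V // v ≠ 0}, a u (v : V) / ‖(v : V)‖)
    (hnondeg : ∀ v : V, v ≠ 0 → ∃ u : U, a u v ≠ 0) :
    ∀ v : V,
      β * ‖v‖ ≤ ⨆ u : {u : U // u ≠ 0}, a (u : U) v / ‖(u : U)‖ := by
  intro v
  let a' := a.mkContinuous₂ M fun u v => (Real.norm_eq_abs _).trans_le (hbdd u v)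
  let A := rieszOperator a'
  have hA : ∀ u v, ⟪A u, v⟫ = a u v := inner_rieszOperator_apply a'
  have hA_below : ∀ u, β * ‖u‖ ≤ ‖A u‖ := fun u =>
    (hinfsup₁ u).trans (by simpa only [hA] using iSup_inner_div_norm_le_norm (A u))
  obtain ⟨K, hK⟩ := antilipschitzWith_iff_exists_mul_le_norm.2 ⟨β, hβ, hA_below⟩
  have hA_surj : Function.Surjective A := A.surjective_of_antilipschitz_of_orthogonal_range_eq_bot
    hK (orthogonal_range_rieszOperator_eq_bot a' hnondeg)
  rcases eq_or_ne v 0 with rfl | hv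
  · simp only [map_zero, zero_div, norm_zero, mul_zero]
    exact Real.iSup_nonneg fun _ => le_rfl
  obtain ⟨u, rfl⟩ := hA_surj v
  have hu : u ≠ 0 := by rintro rfl; exact hv (map_zero A)
  calc β * ‖A u‖ ≤ ‖A u‖ * ‖A u‖ / ‖u‖ := by
        rw [le_div_iff₀ (norm_pos_iff.2 hu)]
        nlinarith [hA_below u, norm_nonneg (A u)]
    _ = a u (A u) / ‖u‖ := by rw [← hA, real_inner_self_eq_norm_mul_norm]
    _ ≤ _ := le_iSup_div_norm (f := fun u' => a u' (A u)) (C := M * ‖A u‖)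
        (fun u' => (le_abs_self _).trans ((hbdd u' _).trans_eq (by ring))) hu

/-- If the first inf-sup condition holds with constant `β > 0` and `a` is
nondegenerate in its second argument, then the second inf-sup condition holds
with the same constant `β`; in particular the two inf-sup constants in
condition (2.8) are equal. -/
theorem infsup_transfer
    {U V : Type*}
    [NormedAddCommGroup U] [InnerProductSpace ℝ U] [CompleteSpace U]
    [NormedAddCommGroup V] [InnerProductSpace ℝ V] [CompleteSpace V]
    (a : U →ₗ[ℝ] V →ₗ[ℝ] ℝ) (M : ℝ) (hM : 0 < M)
    (hbdd : ∀ (u : U) (v : V), |a u v| ≤ M * ‖u‖ * ‖v‖)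
    (β : ℝ) (hβ : 0 < β)
    (hinfsup₁ : ∀ u : U,
      β * ‖u‖ ≤ ⨆ v : {v : V // v ≠ 0}, a u (v : V) / ‖(v : V)‖)
    (hnondeg : ∀ v : V, v ≠ 0 → ∃ u : U, a u v ≠ 0) :
    ∀ v : V,
      β * ‖v‖ ≤ ⨆ u : {u : U // u ≠ 0}, a (u : U) v / ‖(u : U)‖ :=
  infsup_transfer_general a M hbdd β hβ hinfsup₁ hnondeg
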